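/- Suppose each objective f_i is M_i-relatively Lipschitz continuous and μ_t-relatively strongly convex w.r.t. h at the productive step t where it is used, the constraint g is M_g-relatively Lipschitz continuous and μ_g-relatively strongly convex w.r.t. h (with μ_t = μ_g at non-productive steps), and d : E → ℝ is M_d-relatively Lipschitz continuous and 1-relatively strongly convex w.r.t. h with d ≥ 0 on Q and A² = sup_{x ∈ Q} d(x) < ∞. Set M = max of all M_i and M_g. Run the regularized switching algorithm with λ_t = ½·(√((μ_{1:t} + λ_{1:t−1})² + 8·M²/(A² + 2·M_d²)) − (μ_{1:t} + λ_{1:t−1})) and η_t = 1/(μ_{1:t} + λ_{1:t}), where μ_{1:t} + λ_{1:t} > 0. If exactly T productive steps and T_J non-productive steps are made and Regret_T ≥ 0, then Regret_T ≤ λ_{1:T+T_J}·A² + Σ_{t=1}^{T+T_J} (M + λ_t·M_d)²/(μ_{1:t} + λ_{1:t}) − ε·T_J, and g(x_t) ≤ ε at every productive step t. -/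

import Mathlib

/-!
Write `S t = μ_{1:t} + λ_{1:t}` and `φ_t` for the objective used at step `t` (`f_i` or `g`).
The optimality condition of the Bregman projection and the three-point identity, together with
relative Lipschitz continuity (absorbed by Young's inequality) and relative strong convexity of
`φ_t` and `d`, bound one step by
  `φ_t(x_t) - φ_t(x*) + λ_t (d(x_t) - d(x*))`
  `  ≤ (M + λ_t M_d)² / (2 S t) + S (t-1) V(x*, x_t) - S t V(x*, x_{t+1})`.
The Bregman terms telescope, `d(x_t) - d(x*) ≥ -A²`, and at each non-productive step
`g(x_t) - g(x*) > ε` because `g(x*) ≤ 0`; summing over all steps gives the bound.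
-/

open scoped RealInnerProductSpace
open Finset

/-- The Bregman divergence `V(y,x) = h(y) − h(x) − ⟨∇h(x), y − x⟩`. -/
noncomputable def breg {E : Type*} [NormedAddCommGroup E] [InnerProductSpace ℝ E]
    [CompleteSpace E] (h : E → ℝ) (y x : E) : ℝ :=
  h y - h x - ⟪gradient h x, y - x⟫

/-- `f` is `M`-relatively Lipschitz continuous w.r.t. the prox-function `h` on `Q`. -/
noncomputable def RelLipschitz {E : Type*} [NormedAddCommGroup E] [InnerProductSpace ℝ E]
    [CompleteSpace E] (h : E → ℝ) (Q : Set E) (M : ℝ) (f : E → ℝ) : Prop :=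
  ∀ x ∈ Q, ∀ y ∈ Q, 0 ≤ ⟪gradient f x, y - x⟫ + M * Real.sqrt (2 * breg h y x)

/-- `f` is `μ`-relatively strongly convex w.r.t. the prox-function `h` on `Q`. -/
noncomputable def RelStrongConvex {E : Type*} [NormedAddCommGroup E] [InnerProductSpace ℝ E]
    [CompleteSpace E] (h : E → ℝ) (Q : Set E) (μ : ℝ) (f : E → ℝ) : Prop :=
  ∀ x ∈ Q, ∀ y ∈ Q, f y + ⟪gradient f y, x - y⟫ + μ * breg h x y ≤ f x

/-- One mirror-descent step from `x` with step size `η` in the direction `v`: there is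
`y` with `∇h(y) = ∇h(x) − η·v`, and the next iterate `x'` is the Bregman projection of
`y` onto `Q`. -/
noncomputable def MDStepV {E : Type*} [NormedAddCommGroup E] [InnerProductSpace ℝ E]
    [CompleteSpace E] (h : E → ℝ) (Q : Set E) (η : ℝ) (v : E) (x x' : E) : Prop :=
  ∃ y : E, gradient h y = gradient h x - η • v ∧ x' ∈ Q ∧
    IsMinOn (fun z => breg h z y) Q x'

section Bregman

variable {E : Type*} [NormedAddCommGroup E] [InnerProductSpace ℝ E] [CompleteSpace E]
  {h : E → ℝ} {Q : Set E}

theorem ConvexOn.inner_gradient_le_sub (hconv : ConvexOn ℝ Set.univ h)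
    (hdiff : Differentiable ℝ h) (x y : E) : ⟪gradient h x, y - x⟫ ≤ h y - h x := by
  have hpath : HasDerivAt (AffineMap.lineMap x y : ℝ → E) (y - x) 0 := by
    simpa using AffineMap.hasDerivAt_lineMap (a := x) (b := y) (x := (0 : ℝ))
  have hline : HasDerivAt (h ∘ (AffineMap.lineMap x y : ℝ → E)) ⟪gradient h x, y - x⟫ 0 :=
    (hdiff x).hasGradientAt.hasFDerivAt.comp_hasDerivAt_of_eq 0 hpath (by simp)
  have hslope := (hconv.comp_affineMap (AffineMap.lineMap x y)).le_slope_of_hasDerivAt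
    (Set.mem_univ 0) (Set.mem_univ 1) one_pos hline
  simpa [slope_def_field] using hslope

theorem IsMinOn.inner_gradient_breg_nonneg (hQ : Convex ℝ Q) (hdiff : Differentiable ℝ h)
    {y x' u : E} (hx' : x' ∈ Q) (hu : u ∈ Q) (hmin : IsMinOn (fun z => breg h z y) Q x') :
    0 ≤ ⟪gradient h x' - gradient h y, u - x'⟫ := by
  have hderiv : HasFDerivAt (fun z => breg h z y)
      (fderiv ℝ h x' - innerSL ℝ (gradient h y)) x' := by
    refine (((hdiff x').hasFDerivAt.sub_const (h y)).sub
      ((innerSL ℝ (gradient h y)).hasFDerivAt.sub_const ⟪gradient h y, y⟫)).congr_of_eventuallyEq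
      (Filter.Eventually.of_forall fun z => ?_)
    simp only [breg, inner_sub_right, innerSL_apply_apply, Pi.sub_apply]
  rw [inner_sub_left, inner_gradient_left]
  simpa using hmin.localize.hasFDerivWithinAt_nonneg hderiv.hasFDerivWithinAt
    (sub_mem_posTangentConeAt_of_segment_subset (hQ.segment_subset hx' hu))

theorem breg_nonneg (hconv : ConvexOn ℝ Set.univ h) (hdiff : Differentiable ℝ h) (y x : E) :
    0 ≤ breg h y x := by
  have := hconv.inner_gradient_le_sub hdiff x y
  rw [breg]
  linarith

theorem inner_gradient_sub_eq_breg (u x x' : E) :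
    ⟪gradient h x' - gradient h x, u - x'⟫ = breg h u x - breg h u x' - breg h x' x := by
  simp only [breg, inner_sub_left, inner_sub_right]
  ring

theorem mul_sqrt_two_mul_sub_le {K S W : ℝ} (hS : 0 < S) (hW : 0 ≤ W) :
    K * √(2 * W) - S * W ≤ K ^ 2 / (2 * S) := by
  have hsq : S ^ 2 * √(2 * W) ^ 2 = S ^ 2 * (2 * W) := by
    rw [Real.sq_sqrt (by positivity)]
  rw [le_div_iff₀ (by positivity)]
  nlinarith [sq_nonneg (K - S * √(2 * W))]

theorem RelLipschitz.mono {M M' : ℝ} {f : E → ℝ} (hf : RelLipschitz h Q M f) (hM : M ≤ M') :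
    RelLipschitz h Q M' f := fun x hx y hy =>
  (hf x hx y hy).trans (by gcongr)

theorem RelLipschitz.neg_inner_add_smul_le {MF Md lam : ℝ} {F d : E → ℝ}
    (hF : RelLipschitz h Q MF F) (hd : RelLipschitz h Q Md d) (hlam : 0 ≤ lam)
    {x y : E} (hx : x ∈ Q) (hy : y ∈ Q) :
    -⟪gradient F x + lam • gradient d x, y - x⟫ ≤ (MF + lam * Md) * √(2 * breg h y x) := by
  have := mul_le_mul_of_nonneg_left (hd x hx y hy) hlam
  rw [inner_add_left, real_inner_smul_left]
  linarith [hF x hx y hy]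

theorem RelStrongConvex.sub_add_mul_sub_le {μF μd lam : ℝ} {F d : E → ℝ}
    (hF : RelStrongConvex h Q μF F) (hd : RelStrongConvex h Q μd d) (hlam : 0 ≤ lam)
    {x u : E} (hx : x ∈ Q) (hu : u ∈ Q) :
    F x - F u + lam * (d x - d u) ≤
      ⟪gradient F x + lam • gradient d x, x - u⟫ - (μF + lam * μd) * breg h u x := by
  have hflip : ∀ w : E, ⟪w, u - x⟫ = -⟪w, x - u⟫ := fun w => by
    rw [← inner_neg_right, neg_sub]
  have hFux := hF u hu x hx
  have hdux := mul_le_mul_of_nonneg_left (hd u hu x hx) hlam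
  rw [hflip] at hFux hdux
  rw [inner_add_left, real_inner_smul_left]
  linarith

namespace MDStepV

variable {η S : ℝ} {v x x' : E}

theorem mem (hstep : MDStepV h Q η v x x') : x' ∈ Q :=
  hstep.choose_spec.2.1

theorem mul_inner_le_breg (hQ : Convex ℝ Q) (hdiff : Differentiable ℝ h)
    (hstep : MDStepV h Q η v x x') {u : E} (hu : u ∈ Q) :
    η * ⟪v, x' - u⟫ ≤ breg h u x - breg h u x' - breg h x' x := by
  obtain ⟨y, hy, hx', hmin⟩ := hstep
  have hopt := hmin.inner_gradient_breg_nonneg hQ hdiff hx' hu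
  have hdual : gradient h x' - gradient h y = (gradient h x' - gradient h x) + η • v := by
    rw [hy]
    abel
  rw [hdual, inner_add_left, inner_gradient_sub_eq_breg, real_inner_smul_left, ← neg_sub x' u,
    inner_neg_right] at hopt
  linarith

theorem inner_sub_le (hQ : Convex ℝ Q) (hconv : ConvexOn ℝ Set.univ h)
    (hdiff : Differentiable ℝ h) (hS : 0 < S) (hstep : MDStepV h Q (1 / S) v x x')
    {K : ℝ} (hK : -⟪v, x' - x⟫ ≤ K * √(2 * breg h x' x)) {u : E} (hu : u ∈ Q) :
    ⟪v, x - u⟫ ≤ K ^ 2 / (2 * S) + S * (breg h u x - breg h u x') := by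
  have hproj := mul_le_mul_of_nonneg_left (hstep.mul_inner_le_breg hQ hdiff hu) hS.le
  rw [← mul_assoc, mul_one_div_cancel hS.ne', one_mul] at hproj
  have hyoung := mul_sqrt_two_mul_sub_le (K := K) hS (breg_nonneg hconv hdiff x' x)
  have hsplit : ⟪v, x - u⟫ = -⟪v, x' - x⟫ + ⟪v, x' - u⟫ := by
    rw [← inner_neg_right, ← inner_add_right]
    congr 1
    abel
  linarith

theorem sub_add_mul_sub_le (hQ : Convex ℝ Q) (hconv : ConvexOn ℝ Set.univ h)
    (hdiff : Differentiable ℝ h) {F d : E → ℝ} {MF Md μF μd lam : ℝ}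
    (hFL : RelLipschitz h Q MF F) (hdL : RelLipschitz h Q Md d)
    (hFS : RelStrongConvex h Q μF F) (hdS : RelStrongConvex h Q μd d) (hlam : 0 ≤ lam)
    (hS : 0 < S) (hstep : MDStepV h Q (1 / S) (gradient F x + lam • gradient d x) x x')
    (hx : x ∈ Q) {u : E} (hu : u ∈ Q) :
    F x - F u + lam * (d x - d u) ≤
      (MF + lam * Md) ^ 2 / (2 * S) + (S - (μF + lam * μd)) * breg h u x - S * breg h u x' := by
  have hconvex := hFS.sub_add_mul_sub_le hdS hlam hx hu
  have hdescent := hstep.inner_sub_le hQ hconv hdiff hS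
    (hFL.neg_inner_add_smul_le hdL hlam hx hstep.mem) hu
  linarith

theorem sub_le_of_regularizer_le (hQ : Convex ℝ Q) (hconv : ConvexOn ℝ Set.univ h)
    (hdiff : Differentiable ℝ h) {F d : E → ℝ} {MF Md μF lam A : ℝ}
    (hFL : RelLipschitz h Q MF F) (hdL : RelLipschitz h Q Md d)
    (hFS : RelStrongConvex h Q μF F) (hdS : RelStrongConvex h Q 1 d) (hlam : 0 ≤ lam)
    (hS : 0 < S) (hstep : MDStepV h Q (1 / S) (gradient F x + lam • gradient d x) x x')
    (hx : x ∈ Q) {u : E} (hu : u ∈ Q) (hdx : 0 ≤ d x) (hdu : d u ≤ A) :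
    F x - F u ≤ lam * A + (MF + lam * Md) ^ 2 / S +
      ((S - (μF + lam)) * breg h u x - S * breg h u x') := by
  have hbound := hstep.sub_add_mul_sub_le hQ hconv hdiff hFL hdL hFS hdS hlam hS hx hu
  have hreg := mul_le_mul_of_nonneg_left (show -A ≤ d x - d u by linarith) hlam
  have hhalf : (MF + lam * Md) ^ 2 / (2 * S) ≤ (MF + lam * Md) ^ 2 / S :=
    div_le_div_of_nonneg_left (sq_nonneg _) hS (by linarith)
  linarith

end MDStepV

end Bregman

theorem half_sqrt_sq_add_sub_self_nonneg (a : ℝ) {c : ℝ} (hc : 0 ≤ c) :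
    0 ≤ (√(a ^ 2 + c) - a) / 2 := by
  have ha := (le_abs_self a).trans (Real.abs_le_sqrt (le_add_of_nonneg_right hc))
  linarith

theorem Finset.sum_Icc_one_sub_one {G : Type*} [AddCommGroup G] (f : ℕ → G) {t : ℕ} (ht : 1 ≤ t) :
    ∑ s ∈ Icc 1 (t - 1), f s = ∑ s ∈ Icc 1 t, f s - f t := by
  obtain ⟨k, rfl⟩ := Nat.exists_eq_add_of_le' ht
  rw [Nat.add_sub_cancel, sum_Icc_succ_top (by omega), add_sub_cancel_right]

theorem Finset.sum_le_sum_add_of_le_add_sub {m n : ℕ} (hmn : m ≤ n) {a b Φ : ℕ → ℝ}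
    (h : ∀ t ∈ Icc m n, a t ≤ b t + (Φ t - Φ (t + 1))) :
    ∑ t ∈ Icc m n, a t ≤ ∑ t ∈ Icc m n, b t + (Φ m - Φ (n + 1)) := by
  have htelescope := sum_Icc_sub hmn (fun t => -Φ t)
  simp only [neg_sub_neg] at htelescope
  calc ∑ t ∈ Icc m n, a t ≤ ∑ t ∈ Icc m n, (b t + (Φ t - Φ (t + 1))) := sum_le_sum h
    _ = _ := by rw [sum_add_distrib, htelescope]

theorem Finset.sum_le_sum_of_le_add_cumulative_sub {N : ℕ} (hN : 1 ≤ N) {a b μ lam D : ℕ → ℝ}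
    (hpos : 0 ≤ (∑ s ∈ Icc 1 N, μ s) + ∑ s ∈ Icc 1 N, lam s) (hD : 0 ≤ D (N + 1))
    (h : ∀ t ∈ Icc 1 N, a t ≤ b t +
      (((∑ s ∈ Icc 1 t, μ s) + ∑ s ∈ Icc 1 t, lam s - (μ t + lam t)) * D t -
        ((∑ s ∈ Icc 1 t, μ s) + ∑ s ∈ Icc 1 t, lam s) * D (t + 1))) :
    ∑ t ∈ Icc 1 N, a t ≤ ∑ t ∈ Icc 1 N, b t := by
  have htelescope := sum_le_sum_add_of_le_add_sub hN
    (Φ := fun t => ((∑ s ∈ Icc 1 (t - 1), μ s) + ∑ s ∈ Icc 1 (t - 1), lam s) * D t)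
    fun t ht => by
      simpa only [sum_Icc_one_sub_one _ (mem_Icc.mp ht).1, Nat.add_sub_cancel,
        add_sub_add_comm] using h t ht
  simp only [Nat.add_sub_cancel, Nat.sub_self, Icc_eq_empty_of_lt zero_lt_one,
    sum_empty, add_zero, zero_mul, zero_sub] at htelescope
  nlinarith [mul_nonneg hpos hD]

theorem Nat.forall_mem_Icc_one_of_succ {p : ℕ → Prop} {n : ℕ} (h1 : p 1)
    (hsucc : ∀ t ∈ Icc 1 n, p (t + 1)) : ∀ t ∈ Icc 1 n, p t := by
  intro t ht
  obtain rfl | ⟨k, hk, rfl⟩ : t = 1 ∨ ∃ k ∈ Icc 1 n, t = k + 1 := by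
    simp only [mem_Icc] at ht ⊢
    exact (eq_or_ne t 1).imp id fun ht1 => ⟨t - 1, by omega, by omega⟩
  exacts [h1, hsucc k hk]

section Switching

variable {α : Type*} {T : ℕ}

noncomputable def switchObjective (σ : Fin T → ℕ) (f : Fin T → α) (g : α) (t : ℕ) : α :=
  if ht : ∃ i, σ i = t then f ht.choose else g

theorem switchObjective_induction (σ : Fin T → ℕ) {P : ℕ → α → Prop} {f : Fin T → α} {g : α}
    {s : Finset ℕ} (hf : ∀ i, P (σ i) (f i)) (hg : ∀ t ∈ s, (¬∃ i, σ i = t) → P t g)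
    {t : ℕ} (ht : t ∈ s) : P t (switchObjective σ f g t) := by
  unfold switchObjective
  split_ifs with hex
  · have hchoose := hf hex.choose
    rwa [hex.choose_spec] at hchoose
  · exact hg t ht hex

theorem switchObjective_apply {σ : Fin T → ℕ} (hσ : Function.Injective σ) (f : Fin T → α) (g : α)
    (i : Fin T) : switchObjective σ f g (σ i) = f i := by
  have hex : ∃ j, σ j = σ i := ⟨i, rfl⟩
  rw [switchObjective, dif_pos hex, hσ hex.choose_spec]

theorem sum_sub_add_le_sum_switchObjective {TJ : ℕ} {σ : Fin T → ℕ} (hσ : Function.Injective σ)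
    (hσrange : ∀ i, σ i ∈ Icc 1 (T + TJ)) {f : Fin T → α → ℝ} {g : α → ℝ} {x : ℕ → α}
    {u : α} {ε : ℝ} (hproductive : ∀ t ∈ Icc 1 (T + TJ), (g (x t) ≤ ε ↔ ∃ i, σ i = t))
    (hu : g u ≤ 0) :
    ∑ i, f i (x (σ i)) - ∑ i, f i u + ε * TJ ≤
      ∑ t ∈ Icc 1 (T + TJ), (switchObjective σ f g t (x t) - switchObjective σ f g t u) := by
  have hP : univ.image σ ⊆ Icc 1 (T + TJ) := by
    simpa [image_subset_iff] using hσrange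
  have hcard : #(Icc 1 (T + TJ) \ univ.image σ) = TJ := by
    rw [card_sdiff_of_subset hP, card_image_of_injective _ hσ]
    simp
  have hnonproductive : ∀ t ∈ Icc 1 (T + TJ) \ univ.image σ,
      ε ≤ switchObjective σ f g t (x t) - switchObjective σ f g t u := by
    intro t ht
    obtain ⟨ht, hnot⟩ := mem_sdiff.mp ht
    have hnot : ¬∃ i, σ i = t := by simpa using hnot
    have hg : ε < g (x t) := not_le.mp fun hle => hnot ((hproductive t ht).mp hle)
    rw [switchObjective, dif_neg hnot]
    linarith
  have hsum := card_nsmul_le_sum _ _ _ hnonproductive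
  rw [hcard, nsmul_eq_mul] at hsum
  rw [← sum_sdiff hP, sum_image hσ.injOn, ← sum_sub_distrib]
  simp only [switchObjective_apply hσ]
  linarith

end Switching

theorem regularized_switching_regret_general
    {E : Type*} [NormedAddCommGroup E] [InnerProductSpace ℝ E] [FiniteDimensional ℝ E]
    (Q : Set E) (hQconv : Convex ℝ Q)
    (h : E → ℝ) (hdiff : Differentiable ℝ h) (hconv : ConvexOn ℝ Set.univ h)
    (T TJ : ℕ) (hT : 0 < T)
    (f : Fin T → E → ℝ) (g : E → ℝ)
    (Mi : Fin T → ℝ) (Mg μg : ℝ) (μ : ℕ → ℝ)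
    (hfLip : ∀ i, RelLipschitz h Q (Mi i) (f i)) (hgLip : RelLipschitz h Q Mg g)
    (hgSC : RelStrongConvex h Q μg g)
    (M : ℝ) (hM : M = max (⨆ i, Mi i) Mg)
    -- the regularizer d:
    (d : E → ℝ)
    (Md A2 : ℝ)
    (hdLip : RelLipschitz h Q Md d) (hdSC : RelStrongConvex h Q 1 d)
    (hdnn : ∀ z ∈ Q, 0 ≤ d z) (hA2 : IsLUB (d '' Q) A2)
    -- the regularization coefficients and step sizes:
    (lam : ℕ → ℝ)
    (hpos : ∀ t ∈ Finset.Icc 1 (T + TJ),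
      0 < (∑ s ∈ Finset.Icc 1 t, μ s) + ∑ s ∈ Finset.Icc 1 t, lam s)
    (ε : ℝ) (hlam : ∀ t ∈ Finset.Icc 1 (T + TJ), lam t =
      (Real.sqrt (((∑ s ∈ Finset.Icc 1 t, μ s) + ∑ s ∈ Finset.Icc 1 (t - 1), lam s) ^ 2
          + 8 * M ^ 2 / (A2 + 2 * Md ^ 2))
        - ((∑ s ∈ Finset.Icc 1 t, μ s) + ∑ s ∈ Finset.Icc 1 (t - 1), lam s)) / 2)
    -- the iterates and the run of the regularized switching algorithm:
    (x : ℕ → E) (hx1 : x 1 ∈ Q)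
    (σ : Fin T → ℕ) (hσmono : StrictMono σ)
    (hσrange : ∀ i, σ i ∈ Finset.Icc 1 (T + TJ))
    (hproductive : ∀ t ∈ Finset.Icc 1 (T + TJ), (g (x t) ≤ ε ↔ ∃ i, σ i = t))
    -- at the `i`-th productive step, `f i` is `μ_{σ i}`-relatively strongly convex:
    (hfSC : ∀ i, RelStrongConvex h Q (μ (σ i)) (f i))
    -- at non-productive steps, `μ_t = μ_g`:
    (hμg : ∀ t ∈ Finset.Icc 1 (T + TJ), (¬ ∃ i, σ i = t) → μ t = μg)
    (hstepP : ∀ i : Fin T,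
      MDStepV h Q (1 / ((∑ s ∈ Finset.Icc 1 (σ i), μ s) + ∑ s ∈ Finset.Icc 1 (σ i), lam s))
        (gradient (f i) (x (σ i)) + lam (σ i) • gradient d (x (σ i)))
        (x (σ i)) (x (σ i + 1)))
    (hstepN : ∀ t ∈ Finset.Icc 1 (T + TJ), (¬ ∃ i, σ i = t) →
      MDStepV h Q (1 / ((∑ s ∈ Finset.Icc 1 t, μ s) + ∑ s ∈ Finset.Icc 1 t, lam s))
        (gradient g (x t) + lam t • gradient d (x t)) (x t) (x (t + 1)))
    -- the constrained minimizer x*: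
    (xs : E) (hxsQ : xs ∈ Q) (hxsg : g xs ≤ 0) :
    (∀ i, g (x (σ i)) ≤ ε) ∧
    ∑ i, f i (x (σ i)) - ∑ i, f i xs ≤
      (∑ s ∈ Finset.Icc 1 (T + TJ), lam s) * A2 +
        (∑ t ∈ Finset.Icc 1 (T + TJ), (M + lam t * Md) ^ 2 /
          ((∑ s ∈ Finset.Icc 1 t, μ s) + ∑ s ∈ Finset.Icc 1 t, lam s)) - ε * TJ := by
  refine ⟨fun i => (hproductive (σ i) (hσrange i)).mpr ⟨i, rfl⟩, ?_⟩
  have hlam0 : ∀ t ∈ Icc 1 (T + TJ), 0 ≤ lam t := fun t ht => by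
    have hA2nn : 0 ≤ A2 := (hdnn xs hxsQ).trans (hA2.1 ⟨xs, hxsQ, rfl⟩)
    rw [hlam t ht]
    exact half_sqrt_sq_add_sub_self_nonneg _ (by positivity)
  have hMi (i : Fin T) : Mi i ≤ M :=
    hM ▸ le_max_of_le_left (le_ciSup (Set.finite_range Mi).bddAbove i)
  have hφ := fun t (ht : t ∈ Icc 1 (T + TJ)) => switchObjective_induction σ
    (P := fun t F => RelLipschitz h Q M F ∧ RelStrongConvex h Q (μ t) F ∧
      MDStepV h Q (1 / ((∑ s ∈ Icc 1 t, μ s) + ∑ s ∈ Icc 1 t, lam s))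
        (gradient F (x t) + lam t • gradient d (x t)) (x t) (x (t + 1)))
    (fun i => ⟨(hfLip i).mono (hMi i), hfSC i, hstepP i⟩)
    (fun t ht hn => ⟨hgLip.mono (hM ▸ le_max_right _ _), hμg t ht hn ▸ hgSC, hstepN t ht hn⟩) ht
  have hxQ := Nat.forall_mem_Icc_one_of_succ (p := (x · ∈ Q)) hx1 fun t ht => (hφ t ht).2.2.mem
  have hsum := sum_le_sum_of_le_add_cumulative_sub (by omega)
    (hpos _ (right_mem_Icc.mpr (by omega))).le (breg_nonneg hconv hdiff xs (x (T + TJ + 1)))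
    fun t ht => by
      obtain ⟨hLip, hSC, hstep⟩ := hφ t ht
      exact hstep.sub_le_of_regularizer_le hQconv hconv hdiff hLip hdLip hSC hdSC (hlam0 t ht)
        (hpos t ht) (hxQ t ht) hxsQ (hdnn _ (hxQ t ht)) (hA2.1 ⟨xs, hxsQ, rfl⟩)
  rw [sum_add_distrib, ← sum_mul] at hsum
  linarith [sum_sub_add_le_sum_switchObjective (f := f) hσmono.injective hσrange hproductive hxsg]

/-- Theorem 5 (regularized switching Mirror Descent): with the adaptive regularization
coefficients `λ_t` and step sizes `η_t = 1/(μ_{1:t} + λ_{1:t})`, if the run makes exactly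
`T` productive and `T_J` non-productive steps and the regret is nonnegative, then
`g(x_t) ≤ ε` at all productive steps and
`Regret_T ≤ λ_{1:T+T_J}·A² + Σ_t (M + λ_t·M_d)²/(μ_{1:t} + λ_{1:t}) − ε·T_J`. -/
theorem regularized_switching_regret
    {E : Type*} [NormedAddCommGroup E] [InnerProductSpace ℝ E] [FiniteDimensional ℝ E]
    (Q : Set E) (hQne : Q.Nonempty) (hQclosed : IsClosed Q) (hQconv : Convex ℝ Q)
    (h : E → ℝ) (hdiff : Differentiable ℝ h) (hconv : ConvexOn ℝ Set.univ h)
    (T TJ : ℕ) (hT : 0 < T)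
    (f : Fin T → E → ℝ) (g : E → ℝ)
    (hfdiff : ∀ i, Differentiable ℝ (f i)) (hgdiff : Differentiable ℝ g)
    (hfconv : ∀ i, ConvexOn ℝ Set.univ (f i)) (hgconv : ConvexOn ℝ Set.univ g)
    (Mi : Fin T → ℝ) (Mg μg : ℝ) (μ : ℕ → ℝ)
    (hfLip : ∀ i, RelLipschitz h Q (Mi i) (f i)) (hgLip : RelLipschitz h Q Mg g)
    (hgSC : RelStrongConvex h Q μg g)
    (M : ℝ) (hM : M = max (⨆ i, Mi i) Mg)
    -- the regularizer d:
    (d : E → ℝ) (hddiff : Differentiable ℝ d) (hdconv : ConvexOn ℝ Set.univ d)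
    (Md A2 : ℝ)
    (hdLip : RelLipschitz h Q Md d) (hdSC : RelStrongConvex h Q 1 d)
    (hdnn : ∀ z ∈ Q, 0 ≤ d z) (hA2 : IsLUB (d '' Q) A2)
    -- the regularization coefficients and step sizes:
    (lam : ℕ → ℝ)
    (hpos : ∀ t ∈ Finset.Icc 1 (T + TJ),
      0 < (∑ s ∈ Finset.Icc 1 t, μ s) + ∑ s ∈ Finset.Icc 1 t, lam s)
    (ε : ℝ) (hlam : ∀ t ∈ Finset.Icc 1 (T + TJ), lam t =
      (Real.sqrt (((∑ s ∈ Finset.Icc 1 t, μ s) + ∑ s ∈ Finset.Icc 1 (t - 1), lam s) ^ 2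
          + 8 * M ^ 2 / (A2 + 2 * Md ^ 2))
        - ((∑ s ∈ Finset.Icc 1 t, μ s) + ∑ s ∈ Finset.Icc 1 (t - 1), lam s)) / 2)
    (hε : 0 < ε)
    -- the iterates and the run of the regularized switching algorithm:
    (x : ℕ → E) (hx1 : x 1 ∈ Q)
    (σ : Fin T → ℕ) (hσmono : StrictMono σ)
    (hσrange : ∀ i, σ i ∈ Finset.Icc 1 (T + TJ))
    (hproductive : ∀ t ∈ Finset.Icc 1 (T + TJ), (g (x t) ≤ ε ↔ ∃ i, σ i = t))
    -- at the `i`-th productive step, `f i` is `μ_{σ i}`-relatively strongly convex: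
    (hfSC : ∀ i, RelStrongConvex h Q (μ (σ i)) (f i))
    -- at non-productive steps, `μ_t = μ_g`:
    (hμg : ∀ t ∈ Finset.Icc 1 (T + TJ), (¬ ∃ i, σ i = t) → μ t = μg)
    (hstepP : ∀ i : Fin T,
      MDStepV h Q (1 / ((∑ s ∈ Finset.Icc 1 (σ i), μ s) + ∑ s ∈ Finset.Icc 1 (σ i), lam s))
        (gradient (f i) (x (σ i)) + lam (σ i) • gradient d (x (σ i)))
        (x (σ i)) (x (σ i + 1)))
    (hstepN : ∀ t ∈ Finset.Icc 1 (T + TJ), (¬ ∃ i, σ i = t) →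
      MDStepV h Q (1 / ((∑ s ∈ Finset.Icc 1 t, μ s) + ∑ s ∈ Finset.Icc 1 t, lam s))
        (gradient g (x t) + lam t • gradient d (x t)) (x t) (x (t + 1)))
    -- the constrained minimizer x*:
    (xs : E) (hxsQ : xs ∈ Q) (hxsg : g xs ≤ 0)
    (hxsmin : ∀ y ∈ Q, g y ≤ 0 → ∑ i, f i xs ≤ ∑ i, f i y)
    -- nonnegative regret:
    (hReg : 0 ≤ ∑ i, f i (x (σ i)) - ∑ i, f i xs) :

    (∀ i, g (x (σ i)) ≤ ε) ∧
    ∑ i, f i (x (σ i)) - ∑ i, f i xs ≤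
      (∑ s ∈ Finset.Icc 1 (T + TJ), lam s) * A2 +
        (∑ t ∈ Finset.Icc 1 (T + TJ), (M + lam t * Md) ^ 2 /
          ((∑ s ∈ Finset.Icc 1 t, μ s) + ∑ s ∈ Finset.Icc 1 t, lam s)) - ε * TJ :=
  regularized_switching_regret_general Q hQconv h hdiff hconv T TJ hT f g Mi Mg μg μ hfLip hgLip
    hgSC M hM d Md A2 hdLip hdSC hdnn hA2 lam hpos ε hlam x hx1 σ hσmono hσrange hproductive hfSC
    hμg hstepP hstepN xs hxsQ hxsg
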